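/- arXiv:2102.12282 — 2 statements merged into one kernel-verified Lean document; each statement's English description precedes it below -/
import Mathlib

section
/- As α → 0⁺, the Rényi pseudodistance R_α(f,g) = (1/(α+1)) log ∫ f^{α+1} + (1/(α(α+1))) log ∫ g^{α+1} − (1/α) log ∫ f^α g converges to the Kullback–Leibler divergence ∫ g log(g/f). -/
/-!
Write `F(α) = ∫ f^{α+1}`, `G(α) = ∫ g^{α+1}` and `H(α) = ∫ f^α g`, so that `F(0) = G(0) = H(0) = 1`.
Then `R_α = (log F(α) + log G(α) / α) / (α + 1) - log H(α) / α`, and the two difference quotients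
tend to `(log G)'(0) = ∫ g log g` and `(log H)'(0) = ∫ g log f`, whose difference is the
Kullback–Leibler divergence. Splitting the divergence this way needs `g log g` to be integrable:
near `0` the integrals `G(±a)` are nonzero, hence `g^{1±a}` is integrable, and
`|log t| ≤ (t^a + t^{-a}) / a` dominates `g log g` by `(g^{1+a} + g^{1-a}) / a`.
-/

open Real MeasureTheory Filter Set Topology

lemma Real.abs_log_le_rpow_add_rpow_neg_div {t a : ℝ} (ht : 0 < t) (ha : 0 < a) :
    |log t| ≤ (t ^ a + t ^ (-a)) / a := by
  have hpos : log t ≤ t ^ a / a := log_le_rpow_div ht.le ha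
  have hneg : -log t ≤ t ^ (-a) / a := by
    rw [← log_inv, rpow_neg ht.le, ← inv_rpow ht.le]
    exact log_le_rpow_div (inv_nonneg.2 ht.le) ha
  rw [add_div, abs_le]
  constructor <;> linarith [div_nonneg (rpow_nonneg ht.le a) ha.le,
    div_nonneg (rpow_nonneg ht.le (-a)) ha.le]

lemma integrable_mul_log_of_integrable_rpow {Ω : Type*} [MeasurableSpace Ω] {μ : Measure Ω}
    {g : Ω → ℝ} {a : ℝ} (hg_pos : ∀ x, 0 < g x) (hg : AEStronglyMeasurable g μ) (ha : 0 < a)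
    (h_add : Integrable (fun x => g x ^ (1 + a)) μ)
    (h_sub : Integrable (fun x => g x ^ (1 - a)) μ) :
    Integrable (fun x => g x * log (g x)) μ := by
  refine ((h_add.add h_sub).div_const a).mono'
    (hg.mul (hg.aemeasurable.log.aestronglyMeasurable)) (Eventually.of_forall fun x => ?_)
  have hx := hg_pos x
  calc ‖g x * log (g x)‖ = g x * |log (g x)| := by
        rw [Real.norm_eq_abs, abs_mul, abs_of_pos hx]
    _ ≤ g x * ((g x ^ a + g x ^ (-a)) / a) :=
        mul_le_mul_of_nonneg_left (abs_log_le_rpow_add_rpow_neg_div hx ha) hx.le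
    _ = (g x ^ (1 + a) + g x ^ (1 - a)) / a := by
        rw [rpow_add hx, rpow_sub hx, rpow_one, rpow_neg hx.le]
        field_simp

lemma integrable_mul_log_of_continuousAt_integral_rpow {Ω : Type*} [MeasurableSpace Ω]
    {μ : Measure Ω} {g : Ω → ℝ} (hg_pos : ∀ x, 0 < g x) (hg_int : Integrable g μ)
    (hG : ContinuousAt (fun α : ℝ => ∫ x, g x ^ (α + 1) ∂μ) 0)
    (hG0 : ∫ x, g x ^ ((0 : ℝ) + 1) ∂μ ≠ 0) :
    Integrable (fun x => g x * log (g x)) μ := by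
  obtain ⟨ε, hε, hne⟩ := Metric.eventually_nhds_iff.1 (hG.eventually_ne hG0)
  have hint : ∀ α : ℝ, |α| < ε → Integrable (fun x => g x ^ (1 + α)) μ := fun α hα => by
    simpa only [add_comm] using Integrable.of_integral_ne_zero (hne (by simpa using hα))
  have hε2 : |ε / 2| < ε := by rw [abs_of_pos (half_pos hε)]; linarith
  exact integrable_mul_log_of_integrable_rpow hg_pos hg_int.aestronglyMeasurable (half_pos hε)
    (hint _ hε2) (by simpa only [sub_eq_add_neg] using hint _ (by rwa [abs_neg]))

lemma integral_mul_log_div_eq_sub {Ω : Type*} [MeasurableSpace Ω] {μ : Measure Ω}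
    {f g : Ω → ℝ} (hf_pos : ∀ x, 0 < f x) (hg_pos : ∀ x, 0 < g x)
    (hgg : Integrable (fun x => g x * log (g x)) μ)
    (hKL : Integrable (fun x => g x * log (g x / f x)) μ) :
    ∫ x, g x * log (g x / f x) ∂μ = ∫ x, g x * log (g x) ∂μ - ∫ x, g x * log (f x) ∂μ := by
  have hsplit : ∀ x, g x * log (g x / f x) = g x * log (g x) - g x * log (f x) := fun x => by
    rw [log_div (hg_pos x).ne' (hf_pos x).ne']; ring
  have hgf : Integrable (fun x => g x * log (f x)) μ :=
    (hgg.sub hKL).congr (Eventually.of_forall fun x => by simp only [Pi.sub_apply, hsplit]; ring)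
  simp only [hsplit]
  exact integral_sub hgg hgf

lemma tendsto_log_div_of_hasDerivAt {φ : ℝ → ℝ} {d : ℝ} (h : HasDerivAt φ d 0) (h0 : φ 0 = 1) :
    Tendsto (fun t => log (φ t) / t) (𝓝[>] 0) (𝓝 d) := by
  have := (h.log (by simp [h0])).tendsto_slope_zero_right
  simpa [h0, div_eq_inv_mul] using this

/-- As `α → 0⁺`, the Rényi pseudodistance
`R_α(f,g) = (1/(α+1)) log ∫ f^{α+1} + (1/(α(α+1))) log ∫ g^{α+1} − (1/α) log ∫ f^α g`
converges to the Kullback–Leibler divergence `∫ g log(g/f)`.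
The regularity conditions (differentiability in `α` near `0` with differentiation under the
integral sign) are encoded as `HasDerivAt`/continuity hypotheses for the integral functionals. -/
theorem stmt_2 (f g : ℝ → ℝ)
    (hf_pos : ∀ x, 0 < f x) (hg_pos : ∀ x, 0 < g x)
    (hf_prob : ∫ x, f x = 1) (hg_prob : ∫ x, g x = 1)
    (hF_cont : ContinuousAt (fun α : ℝ => ∫ x, f x ^ (α + 1)) 0)
    (hG_deriv : HasDerivAt (fun α : ℝ => ∫ x, g x ^ (α + 1))
      (∫ x, g x * Real.log (g x)) 0)
    (hFG_deriv : HasDerivAt (fun α : ℝ => ∫ x, f x ^ α * g x)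
      (∫ x, g x * Real.log (f x)) 0)
    (hKL : Integrable (fun x => g x * Real.log (g x / f x))) :
    Tendsto (fun α : ℝ =>
        (1 / (α + 1)) * Real.log (∫ x, f x ^ (α + 1)) +
        (1 / (α * (α + 1))) * Real.log (∫ x, g x ^ (α + 1)) -
        (1 / α) * Real.log (∫ x, f x ^ α * g x))
      (nhdsWithin 0 (Ioi 0))
      (nhds (∫ x, g x * Real.log (g x / f x))) := by
  have hF0 : ∫ x, f x ^ ((0 : ℝ) + 1) = 1 := by simpa using hf_prob
  have hG0 : ∫ x, g x ^ ((0 : ℝ) + 1) = 1 := by simpa using hg_prob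
  have hH0 : ∫ x, f x ^ (0 : ℝ) * g x = 1 := by simpa using hg_prob
  have hgg : Integrable (fun x => g x * log (g x)) :=
    integrable_mul_log_of_continuousAt_integral_rpow hg_pos
      (Integrable.of_integral_ne_zero (by simp [hg_prob])) hG_deriv.continuousAt
      (by rw [hG0]; exact one_ne_zero)
  have hinv : Tendsto (fun α : ℝ => 1 / (α + 1)) (𝓝[>] 0) (𝓝 1) := by
    simpa using (tendsto_nhdsWithin_of_tendsto_nhds
      ((continuous_add_const (1 : ℝ)).tendsto 0)).inv₀ (by norm_num)
  have hlogF : Tendsto (fun α : ℝ => log (∫ x, f x ^ (α + 1))) (𝓝[>] 0) (𝓝 0) := by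
    simpa [Function.comp_def, hf_prob] using tendsto_nhdsWithin_of_tendsto_nhds
      ((continuousAt_log (by rw [hF0]; exact one_ne_zero)).comp hF_cont).tendsto
  have hlim := ((hinv.mul hlogF).add (hinv.mul (tendsto_log_div_of_hasDerivAt hG_deriv hG0))).sub
    (tendsto_log_div_of_hasDerivAt hFG_deriv hH0)
  rw [mul_zero, zero_add, one_mul, ← integral_mul_log_div_eq_sub hf_pos hg_pos hgg hKL] at hlim
  refine hlim.congr' (eventually_mem_nhdsWithin.mono fun α (hα : 0 < α) => ?_)
  field_simp
end

section
/- The function α ↦ ((α+1)^{5/2}/α) exp(−(3α+2)/(2(α+1))) (the gross error sensitivity of the scale functional) is uniquely minimized over α > 0 at α = √(2/3). -/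
/-!
Taking logarithms, `log γ_σ(α) = (5/2) log (α+1) - log α - (3α+2)/(2(α+1))`, whose derivative
is `(3α² - 2) / (2α(α+1)²)`. It is negative on `(0, √(2/3))` and positive beyond, so `log γ_σ`,
and with it `γ_σ`, has its strict global minimum on `(0, ∞)` at `√(2/3)`.
-/

open Real Set

theorem lt_apply_of_hasDerivAt_neg_of_pos {f f' : ℝ → ℝ} {a b x : ℝ} (hba : b < a)
    (hf : ∀ y, b < y → HasDerivAt f (f' y) y)
    (hneg : ∀ y, b < y → y < a → f' y < 0) (hpos : ∀ y, a < y → 0 < f' y)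
    (hx : b < x) (hxa : x ≠ a) : f a < f x := by
  have hcont : ∀ D ⊆ Ioi b, ContinuousOn f D := fun D hD y hy =>
    (hf y (hD hy)).continuousAt.continuousWithinAt
  rcases hxa.lt_or_gt with hlt | hgt
  · have hanti : StrictAntiOn f (Ioc b a) :=
      strictAntiOn_of_hasDerivWithinAt_neg (convex_Ioc b a) (hcont _ Ioc_subset_Ioi_self)
        (fun y hy => (hf y (interior_subset hy).1).hasDerivWithinAt)
        (fun y hy => by rw [interior_Ioc] at hy; exact hneg y hy.1 hy.2)
    exact hanti ⟨hx, hlt.le⟩ ⟨hba, le_rfl⟩ hlt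
  · have hmono : StrictMonoOn f (Ici a) :=
      strictMonoOn_of_hasDerivWithinAt_pos (convex_Ici a)
        (hcont _ fun y hy => hba.trans_le hy)
        (fun y hy => (hf y (hba.trans_le (interior_subset hy))).hasDerivWithinAt)
        (fun y hy => by rw [interior_Ici] at hy; exact hpos y hy)
    exact hmono self_mem_Ici hgt.le hgt

noncomputable def logGrossErrorSensitivity (α : ℝ) : ℝ :=
  5 / 2 * log (α + 1) - log α - (3 * α + 2) / (2 * (α + 1))

theorem hasDerivAt_logGrossErrorSensitivity {α : ℝ} (hα : 0 < α) :
    HasDerivAt logGrossErrorSensitivity ((3 * α ^ 2 - 2) / (2 * α * (α + 1) ^ 2)) α := by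
  have hα1 : α + 1 ≠ 0 := by linarith
  have hlog : HasDerivAt (fun x => log (x + 1)) (1 / (α + 1)) α := by
    simpa using ((hasDerivAt_id α).add_const 1).log hα1
  have hfrac : HasDerivAt (fun x => (3 * x + 2) / (2 * (x + 1)))
      ((3 * (2 * (α + 1)) - (3 * α + 2) * 2) / (2 * (α + 1)) ^ 2) α := by
    have hnum : HasDerivAt (fun x => 3 * x + 2) 3 α := by
      simpa using ((hasDerivAt_id α).const_mul 3).add_const 2
    have hden : HasDerivAt (fun x => 2 * (x + 1)) 2 α := by
      simpa using ((hasDerivAt_id α).add_const 1).const_mul 2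
    exact hnum.div hden (by positivity)
  refine (((hlog.const_mul (5 / 2)).sub (hasDerivAt_log hα.ne')).sub hfrac).congr_deriv ?_
  field_simp
  ring

theorem rpow_div_mul_exp_eq_exp_logGrossErrorSensitivity {α : ℝ} (hα : 0 < α) :
    (α + 1) ^ ((5 : ℝ) / 2) / α * exp (-(3 * α + 2) / (2 * (α + 1)))
      = exp (logGrossErrorSensitivity α) := by
  rw [logGrossErrorSensitivity, sub_eq_add_neg, exp_add, exp_sub, exp_log hα, neg_div,
    rpow_def_of_pos (by linarith), mul_comm (log _)]

theorem logGrossErrorSensitivity_lt {α : ℝ} (hα : 0 < α) (hne : α ≠ √(2 / 3)) :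
    logGrossErrorSensitivity √(2 / 3) < logGrossErrorSensitivity α := by
  refine lt_apply_of_hasDerivAt_neg_of_pos (sqrt_pos.2 (by norm_num))
    (fun y hy => hasDerivAt_logGrossErrorSensitivity hy) (fun y hy hya => ?_)
    (fun y hay => ?_) hα hne
  · have : y ^ 2 < 2 / 3 := (lt_sqrt hy.le).1 hya
    exact div_neg_of_neg_of_pos (by linarith) (by positivity)
  · have hy : 0 < y := (sqrt_nonneg _).trans_lt hay
    have : 2 / 3 < y ^ 2 := (sqrt_lt' hy).1 hay
    exact div_pos (by linarith) (by positivity)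

/-- The gross error sensitivity of the scale functional,
`γ_σ(α) = (α+1)^{5/2} α⁻¹ exp(−(3α+2)/(2(α+1)))`, is uniquely minimized over `α > 0`
at `α = √(2/3)`. -/
theorem stmt_10 (γ : ℝ → ℝ)
    (hγ : ∀ α : ℝ, 0 < α →
      γ α = (α + 1) ^ ((5:ℝ)/2) / α * Real.exp (-(3 * α + 2) / (2 * (α + 1)))) :
    ∀ α : ℝ, 0 < α → α ≠ Real.sqrt (2/3) → γ (Real.sqrt (2/3)) < γ α := by
  intro α hα hne
  have hmin : 0 < √(2 / 3) := sqrt_pos.2 (by norm_num)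
  rw [hγ α hα, hγ _ hmin, rpow_div_mul_exp_eq_exp_logGrossErrorSensitivity hα,
    rpow_div_mul_exp_eq_exp_logGrossErrorSensitivity hmin]
  exact exp_lt_exp.2 (logGrossErrorSensitivity_lt hα hne)
end
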